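/- arXiv:2310.16107 — 6 statements merged into one kernel-verified Lean document; each statement's English description precedes it below -/
import Mathlib

section
/- For any stochastic (column-stochastic, entrywise nonnegative, columns summing to 1) matrix T and any two strictly positive probability vectors p, q such that Tp and Tq are also strictly positive, the relative entropy contracts: D(Tp||Tq) ≤ D(p||q). -/
/-!
Row by row, this is the log-sum inequality `A log (A / B) ≤ ∑ aⱼ log (aⱼ / bⱼ)` for
`aⱼ = Tᵢⱼ pⱼ` and `bⱼ = Tᵢⱼ qⱼ`, i.e. Jensen's inequality for the convex function `x ↦ x log x`
with weights `bⱼ / B`. Since `aⱼ / bⱼ = pⱼ / qⱼ`, summing over the rows and using that the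
columns of `T` sum to `1` gives back `D(p‖q)`.
-/

open Finset Matrix

/-- Classical relative entropy (KL divergence) of finite probability vectors. -/
noncomputable def relEnt {n : ℕ} (p q : Fin n → ℝ) : ℝ :=
  ∑ i, p i * Real.log (p i / q i)

open Real

theorem Real.sum_mul_log_sum_div_sum_le {ι : Type*} (s : Finset ι) {a b : ι → ℝ}
    (ha : ∀ i ∈ s, 0 ≤ a i) (hb : ∀ i ∈ s, 0 ≤ b i) (hab : ∀ i ∈ s, b i = 0 → a i = 0) :
    (∑ i ∈ s, a i) * log ((∑ i ∈ s, a i) / ∑ i ∈ s, b i) ≤ ∑ i ∈ s, a i * log (a i / b i) := by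
  set B := ∑ i ∈ s, b i
  rcases (sum_nonneg hb).eq_or_lt with hB | hB
  · have ha0 : ∀ i ∈ s, a i = 0 := fun i hi =>
      hab i hi ((sum_eq_zero_iff_of_nonneg hb).mp hB.symm i hi)
    rw [sum_eq_zero ha0, sum_eq_zero fun i hi => by rw [ha0 i hi, zero_mul], zero_mul]
  have hcancel : ∀ i ∈ s, ∀ c : ℝ, b i / B * (a i / b i * c) = a i * c / B := fun i hi c => by
    rw [div_mul_eq_mul_div, ← mul_assoc, mul_div_cancel_of_imp' (hab i hi)]
  have jensen := convexOn_mul_log.map_sum_le (t := s) (w := fun i => b i / B)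
    (p := fun i => a i / b i) (fun i hi => div_nonneg (hb i hi) hB.le)
    (by rw [← sum_div, div_self hB.ne'])
    (fun i hi => Set.mem_Ici.mpr (div_nonneg (ha i hi) (hb i hi)))
  simp only [smul_eq_mul] at jensen
  rw [sum_congr rfl fun i hi => by simpa using hcancel i hi 1,
    sum_congr rfl fun i hi => hcancel i hi _, ← sum_div, ← sum_div, div_mul_eq_mul_div] at jensen
  exact (div_le_div_iff_of_pos_right hB).mp jensen

theorem Matrix.mulVec_mul_log_div_mulVec_le {m n : Type*} [Fintype n] {T : Matrix m n ℝ}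
    (hT : ∀ i j, 0 ≤ T i j) {p q : n → ℝ} (hp : ∀ j, 0 ≤ p j) (hq : ∀ j, 0 < q j) (i : m) :
    (T *ᵥ p) i * log ((T *ᵥ p) i / (T *ᵥ q) i) ≤ ∑ j, T i j * (p j * log (p j / q j)) := by
  have logSum := Real.sum_mul_log_sum_div_sum_le univ (a := fun j => T i j * p j)
    (b := fun j => T i j * q j) (fun j _ => mul_nonneg (hT i j) (hp j))
    (fun j _ => mul_nonneg (hT i j) (hq j).le)
    (fun j _ h => by rw [(mul_eq_zero_iff_right (hq j).ne').mp h, zero_mul])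
  refine logSum.trans_eq (sum_congr rfl fun j _ => ?_)
  rcases (hT i j).eq_or_lt with h0 | h0
  · simp [← h0]
  · rw [mul_div_mul_left _ _ h0.ne', mul_assoc]

theorem relEnt_contracts_under_stochastic_general {n : ℕ} (T : Matrix (Fin n) (Fin n) ℝ)
    (hTpos : ∀ i j, 0 ≤ T i j) (hTcol : ∀ j, ∑ i, T i j = 1)
    (p q : Fin n → ℝ)
    (hp : ∀ i, 0 < p i) (hq : ∀ i, 0 < q i) :
    relEnt (T.mulVec p) (T.mulVec q) ≤ relEnt p q := by
  calc relEnt (T.mulVec p) (T.mulVec q)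
      ≤ ∑ i, ∑ j, T i j * (p j * log (p j / q j)) :=
        sum_le_sum fun i _ => mulVec_mul_log_div_mulVec_le hTpos (fun j => (hp j).le) hq i
    _ = ∑ j, (∑ i, T i j) * (p j * log (p j / q j)) := by
        rw [sum_comm]; simp only [sum_mul]
    _ = relEnt p q := by simp only [hTcol, one_mul, relEnt]

/-- Data-processing inequality: relative entropy contracts under stochastic maps. -/
theorem relEnt_contracts_under_stochastic {n : ℕ} (T : Matrix (Fin n) (Fin n) ℝ)
    (hTpos : ∀ i j, 0 ≤ T i j) (hTcol : ∀ j, ∑ i, T i j = 1)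
    (p q : Fin n → ℝ)
    (hp : ∀ i, 0 < p i) (hq : ∀ i, 0 < q i)
    (hps : ∑ i, p i = 1) (hqs : ∑ i, q i = 1)
    (hTp : ∀ i, 0 < (T.mulVec p) i) (hTq : ∀ i, 0 < (T.mulVec q) i) :
    relEnt (T.mulVec p) (T.mulVec q) ≤ relEnt p q :=
  relEnt_contracts_under_stochastic_general T hTpos hTcol p q hp hq
end

section
/- The classical Fisher information metric contracts under stochastic maps: for any column-stochastic matrix T, any strictly positive probability vector p with Tp strictly positive, and any vector v with Σᵢ vᵢ = 0, it holds that Σᵢ (Tv)ᵢ² / (Tp)ᵢ ≤ Σᵢ vᵢ² / pᵢ. -/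
open Finset Matrix

/-- The classical Fisher information metric contracts under stochastic maps. -/
theorem fisher_contracts_under_stochastic {n : ℕ} (T : Matrix (Fin n) (Fin n) ℝ)
    (hTpos : ∀ i j, 0 ≤ T i j) (hTcol : ∀ j, ∑ i, T i j = 1)
    (p : Fin n → ℝ) (hp : ∀ i, 0 < p i) (hps : ∑ i, p i = 1)
    (hTp : ∀ i, 0 < (T.mulVec p) i)
    (v : Fin n → ℝ) (hv : ∑ i, v i = 0) :
    ∑ i, (T.mulVec v i) ^ 2 / (T.mulVec p) i ≤ ∑ i, (v i) ^ 2 / p i := by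
  have key : ∀ i, (T.mulVec v i) ^ 2 / (T.mulVec p) i ≤ ∑ j, T i j * ((v j) ^ 2 / p j) := by
    intro i
    rw [div_le_iff₀ (hTp i)]
    have cs := Finset.sum_sq_le_sum_mul_sum_of_sq_eq_mul (Finset.univ : Finset (Fin n))
      (r := fun j => T i j * v j)
      (f := fun j => T i j * p j)
      (g := fun j => T i j * ((v j) ^ 2 / p j))
      (fun j _ => mul_nonneg (hTpos i j) (hp j).le)
      (fun j _ => mul_nonneg (hTpos i j) (div_nonneg (sq_nonneg _) (hp j).le))
      (fun j _ => by field_simp [(hp j).ne'])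
    simpa [Matrix.mulVec, dotProduct, mul_comm] using cs
  calc ∑ i, (T.mulVec v i) ^ 2 / (T.mulVec p) i
      ≤ ∑ i, ∑ j, T i j * ((v j) ^ 2 / p j) := Finset.sum_le_sum fun i _ => key i
    _ = ∑ j, (∑ i, T i j) * ((v j) ^ 2 / p j) := by
        rw [Finset.sum_comm]; simp [Finset.sum_comm, ← Finset.sum_mul]
    _ = ∑ i, (v i) ^ 2 / p i := by simp [hTcol]
end

section
/- Converse Chentsov for classical maps: let T be an n×n real matrix (a linear map on ℝⁿ) such that (i) there exists a strictly positive probability vector p₀ with Tp₀ a strictly positive probability vector, and (ii) for every p in the interior of the probability simplex with Tp in the interior of the simplex, and every v with Σᵢ vᵢ = 0, Σᵢ (Tv)ᵢ²/(Tp)ᵢ ≤ Σᵢ vᵢ²/pᵢ. If additionally T preserves the sum of entries, then T maps the probability simplex into itself, i.e., Tq has nonnegative entries for every probability vector q. -/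
open Finset Matrix

/-- Converse Chentsov theorem: a sum-preserving linear map that contracts the
classical Fisher metric on the interior of the simplex maps the probability
simplex into the nonnegative orthant (i.e., it is a stochastic-type map). -/
theorem fisher_contraction_implies_positivity {n : ℕ} (T : Matrix (Fin n) (Fin n) ℝ)
    (hsum : ∀ x : Fin n → ℝ, ∑ i, (T.mulVec x) i = ∑ i, x i)
    (hexists : ∃ p₀ : Fin n → ℝ, (∀ i, 0 < p₀ i) ∧ (∑ i, p₀ i = 1) ∧
      (∀ i, 0 < (T.mulVec p₀) i))
    (hcontr : ∀ p : Fin n → ℝ, (∀ i, 0 < p i) → (∑ i, p i = 1) →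
      (∀ i, 0 < (T.mulVec p) i) →
      ∀ v : Fin n → ℝ, (∑ i, v i = 0) →
        ∑ i, (T.mulVec v i) ^ 2 / (T.mulVec p) i ≤ ∑ i, (v i) ^ 2 / p i) :
    ∀ q : Fin n → ℝ, (∀ i, 0 ≤ q i) → (∑ i, q i = 1) →
      ∀ i, 0 ≤ (T.mulVec q) i := by
  obtain ⟨p₀, hp₀pos, hp₀sum, ha⟩ := hexists
  intro q hq hqsum
  by_contra hneg
  push_neg at hneg
  obtain ⟨k, hk⟩ := hneg
  set a : Fin n → ℝ := T.mulVec p₀ with ha_def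
  set b : Fin n → ℝ := T.mulVec q with hb_def
  -- the set of bad coordinates
  have hSne : (Finset.univ.filter fun i => b i < 0).Nonempty :=
    ⟨k, by simp [hk]⟩
  obtain ⟨i0, hi0mem, hi0min⟩ :=
    Finset.exists_min_image _ (fun i => a i / (a i - b i)) hSne
  rw [Finset.mem_filter] at hi0mem
  have hbi0 : b i0 < 0 := hi0mem.2
  set D : ℝ := a i0 - b i0 with hD_def
  have hai0 : 0 < a i0 := ha i0
  have hD : 0 < D := by simp only [hD_def]; linarith
  set tb : ℝ := a i0 / D with htb_def
  have htb_pos : 0 < tb := div_pos hai0 hD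
  have htb_lt : tb < 1 := by
    rw [htb_def, div_lt_one hD]; simp only [hD_def]; linarith
  have htbD : tb * D = a i0 := div_mul_cancel₀ _ (ne_of_gt hD)
  -- a uniform bound M on the right-hand side
  set M : ℝ := ∑ j, (p₀ j - q j) ^ 2 / ((1 - tb) * p₀ j) with hM_def
  have hM0 : 0 ≤ M := by
    apply Finset.sum_nonneg
    intro j _
    have : 0 < (1 - tb) * p₀ j := mul_pos (by linarith) (hp₀pos j)
    positivity
  -- choose a small epsilon
  set ε : ℝ := min (tb / 2) (D / (2 * (M + 1))) with hε_def
  have hε_pos : 0 < ε := lt_min (by linarith) (div_pos hD (by linarith))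
  have hε_le : ε ≤ tb / 2 := min_le_left _ _
  have hε_le2 : ε * (2 * (M + 1)) ≤ D := by
    have : ε ≤ D / (2 * (M + 1)) := min_le_right _ _
    rw [le_div_iff₀ (by linarith)] at this
    linarith
  set t : ℝ := tb - ε with ht_def
  have ht_pos : 0 < t := by simp only [ht_def]; linarith
  have ht_lt_tb : t < tb := by simp only [ht_def]; linarith
  have ht_lt1 : t < 1 := lt_trans ht_lt_tb htb_lt
  -- the interior point p = (1-t) p₀ + t q
  set p : Fin n → ℝ := fun j => (1 - t) * p₀ j + t * q j with hp_def
  have hp_pos : ∀ j, 0 < p j := by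
    intro j
    have h1 : 0 < (1 - t) * p₀ j := mul_pos (by linarith) (hp₀pos j)
    have h2 : 0 ≤ t * q j := mul_nonneg (le_of_lt ht_pos) (hq j)
    simp only [hp_def]; linarith
  have hp_sum : ∑ j, p j = 1 := by
    simp only [hp_def]
    rw [Finset.sum_add_distrib, ← Finset.mul_sum, ← Finset.mul_sum, hp₀sum, hqsum]
    ring
  have hTp : ∀ i, T.mulVec p i = (1 - t) * a i + t * b i := by
    intro i
    simp only [ha_def, hb_def, hp_def, Matrix.mulVec, dotProduct,
      Finset.mul_sum, ← Finset.sum_add_distrib]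
    congr 1
    funext j
    ring
  have hTp_pos : ∀ i, 0 < T.mulVec p i := by
    intro i
    rw [hTp i]
    by_cases hbi : b i < 0
    · have hiS : i ∈ Finset.univ.filter fun i => b i < 0 := by simp [hbi]
      have hmin := hi0min i hiS
      have hDi : 0 < a i - b i := by have := ha i; linarith
      have : tb * (a i - b i) ≤ a i := by
        rw [htb_def] at hmin ⊢
        calc a i0 / D * (a i - b i) ≤ a i / (a i - b i) * (a i - b i) := by
              apply mul_le_mul_of_nonneg_right hmin (le_of_lt hDi)
          _ = a i := div_mul_cancel₀ _ (ne_of_gt hDi)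
      nlinarith [ht_lt_tb, hDi]
    · push_neg at hbi
      have := ha i
      nlinarith
  -- the tangent vector v = p₀ - q
  have hvsum : ∑ j, (p₀ j - q j) = 0 := by
    rw [Finset.sum_sub_distrib, hp₀sum, hqsum]; ring
  have hTv : ∀ i, T.mulVec (fun j => p₀ j - q j) i = a i - b i := by
    intro i
    simp only [ha_def, hb_def, Matrix.mulVec, dotProduct, ← Finset.sum_sub_distrib]
    congr 1
    funext j
    ring
  have hkey := hcontr p hp_pos hp_sum hTp_pos (fun j => p₀ j - q j) hvsum
  -- denominator of the i0 term
  have hden : T.mulVec p i0 = ε * D := by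
    rw [hTp i0]
    have : (1 - t) * a i0 + t * b i0 = a i0 - t * D := by
      simp only [hD_def]; ring
    rw [this, ht_def]
    have : (tb - ε) * D = a i0 - ε * D := by rw [sub_mul, htbD]
    rw [this]; ring
  -- the single i0 term bounds the LHS
  have hsingle : D ^ 2 / (ε * D) ≤ ∑ i, (T.mulVec (fun j => p₀ j - q j) i) ^ 2 / (T.mulVec p) i := by
    have := Finset.single_le_sum
      (f := fun i => (T.mulVec (fun j => p₀ j - q j) i) ^ 2 / (T.mulVec p) i)
      (fun i _ => div_nonneg (sq_nonneg _) (le_of_lt (hTp_pos i)))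
      (Finset.mem_univ i0)
    rwa [hTv i0, hden, ← hD_def] at this
  -- the RHS is at most M
  have hrhs : ∑ j, (p₀ j - q j) ^ 2 / p j ≤ M := by
    rw [hM_def]
    apply Finset.sum_le_sum
    intro j _
    have hden1 : 0 < (1 - tb) * p₀ j := mul_pos (by linarith) (hp₀pos j)
    have hle : (1 - tb) * p₀ j ≤ p j := by
      have h2 : 0 ≤ t * q j := mul_nonneg (le_of_lt ht_pos) (hq j)
      have : (1 - tb) * p₀ j ≤ (1 - t) * p₀ j := by
        apply mul_le_mul_of_nonneg_right (by linarith) (le_of_lt (hp₀pos j))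
      simp only [hp_def]; linarith
    exact div_le_div_of_nonneg_left (sq_nonneg _) hden1 hle
  have hfinal : D ^ 2 / (ε * D) ≤ M := le_trans hsingle (le_trans hkey hrhs)
  have hεD : 0 < ε * D := mul_pos hε_pos hD
  rw [div_le_iff₀ hεD] at hfinal
  nlinarith [hfinal, hε_le2, hε_pos, hD, hM0]
end

section
/- Consequence: any Hermitian-preserving linear map Φ that contracts a quantum Fisher metric K_f at every interior point (where defined) is trace non-increasing on positive definite matrices: Tr[Φ(ρ)] ≤ Tr[ρ] for all ρ > 0 with Φ(ρ) > 0. -/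
open Matrix Finset
open scoped ComplexOrder

/-- Quantum Fisher quadratic form `K_{f,ρ}(A,A)` in the eigenbasis of `ρ`. -/
noncomputable def Kf (f : ℝ → ℝ) {d : ℕ} (ρ A : Matrix (Fin d) (Fin d) ℂ) : ℝ :=
  if h : ρ.IsHermitian then
    ∑ i, ∑ j,
      ‖((h.eigenvectorUnitary : Matrix (Fin d) (Fin d) ℂ)ᴴ * A *
        (h.eigenvectorUnitary : Matrix (Fin d) (Fin d) ℂ)) i j‖ ^ 2 /
        (h.eigenvalues j * f (h.eigenvalues i / h.eigenvalues j))
  else 0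

/-! Taking the tangent vector `A = ρ` in the contraction inequality gives the claim, because
`K_{f,ρ}(ρ, ρ) = Tr ρ`: in the eigenbasis of `ρ` only the diagonal terms `λᵢ² / (λᵢ f 1) = λᵢ`
survive. -/

namespace Matrix.IsHermitian

variable {𝕜 n : Type*} [RCLike 𝕜] [Fintype n] [DecidableEq n] {A : Matrix n n 𝕜}

theorem conjTranspose_eigenvectorUnitary_mul_mul (hA : A.IsHermitian) :
    (hA.eigenvectorUnitary : Matrix n n 𝕜)ᴴ * A * (hA.eigenvectorUnitary : Matrix n n 𝕜) =
      diagonal (RCLike.ofReal ∘ hA.eigenvalues) := by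
  rw [← star_eq_conjTranspose]
  simpa [Unitary.conjStarAlgAut_apply] using hA.conjStarAlgAut_star_eigenvectorUnitary

theorem re_trace_eq_sum_eigenvalues (hA : A.IsHermitian) :
    RCLike.re A.trace = ∑ i, hA.eigenvalues i := by
  simp [hA.trace_eq_sum_eigenvalues]

end Matrix.IsHermitian

theorem Kf_self_eq_re_trace {d : ℕ} (f : ℝ → ℝ) (hf1 : f 1 = 1)
    {ρ : Matrix (Fin d) (Fin d) ℂ} (hρ : ρ.IsHermitian) : Kf f ρ ρ = ρ.trace.re := by
  rw [Kf, dif_pos hρ, hρ.conjTranspose_eigenvectorUnitary_mul_mul,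
    ← RCLike.re_eq_complex_re, hρ.re_trace_eq_sum_eigenvalues]
  refine sum_congr rfl fun i _ => ?_
  rw [sum_eq_single i (fun j _ hj => by simp [diagonal_apply_ne' _ hj]) (by simp),
    diagonal_apply_eq]
  rcases eq_or_ne (hρ.eigenvalues i) 0 with hzero | hne
  · -- a zero eigenvalue contributes `0 / 0 = 0` to the form, as to the trace
    simp [hzero]
  · simp only [Function.comp_apply, RCLike.norm_ofReal, sq_abs,
      div_self hne, hf1, mul_one]
    field_simp

theorem fisher_contraction_implies_trace_nonincreasing_general {d : ℕ} (f : ℝ → ℝ)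
    (hf1 : f 1 = 1)
    (Φ : Matrix (Fin d) (Fin d) ℂ →ₗ[ℂ] Matrix (Fin d) (Fin d) ℂ)
    (hcontr : ∀ (ρ A : Matrix (Fin d) (Fin d) ℂ), ρ.PosDef → (Φ ρ).PosDef →
      A.IsHermitian → Kf f (Φ ρ) (Φ A) ≤ Kf f ρ A) :
    ∀ ρ : Matrix (Fin d) (Fin d) ℂ, ρ.PosDef → (Φ ρ).PosDef →
      (Matrix.trace (Φ ρ)).re ≤ (Matrix.trace ρ).re := by
  intro ρ hρ hΦρ
  have hcontr_self := hcontr ρ ρ hρ hΦρ hρ.1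
  rwa [Kf_self_eq_re_trace f hf1 hρ.1, Kf_self_eq_re_trace f hf1 hΦρ.1] at hcontr_self

/-- A Hermitian-preserving linear map contracting the quantum Fisher metric at
every interior point is trace non-increasing on positive definite matrices. -/
theorem fisher_contraction_implies_trace_nonincreasing {d : ℕ} (f : ℝ → ℝ)
    (hfpos : ∀ x > (0 : ℝ), 0 < f x) (hf1 : f 1 = 1)
    (hfsymm : ∀ x > (0 : ℝ), x * f (1 / x) = f x)
    (Φ : Matrix (Fin d) (Fin d) ℂ →ₗ[ℂ] Matrix (Fin d) (Fin d) ℂ)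
    (hherm : ∀ A : Matrix (Fin d) (Fin d) ℂ, Φ Aᴴ = (Φ A)ᴴ)
    (hcontr : ∀ (ρ A : Matrix (Fin d) (Fin d) ℂ), ρ.PosDef → (Φ ρ).PosDef →
      A.IsHermitian → Kf f (Φ ρ) (Φ A) ≤ Kf f ρ A) :
    ∀ ρ : Matrix (Fin d) (Fin d) ℂ, ρ.PosDef → (Φ ρ).PosDef →
      (Matrix.trace (Φ ρ)).re ≤ (Matrix.trace ρ).re :=
  fisher_contraction_implies_trace_nonincreasing_general f hf1 Φ hcontr
end

section
/- Classical corollary via divergences: let T be a linear map on ℝⁿ preserving the sum of entries and mapping some strictly positive probability vector to a strictly positive probability vector. If D(Tp||Tq) ≤ D(p||q) for all strictly positive probability vectors p, q (whenever both sides are defined, i.e., Tp, Tq strictly positive), then T maps the probability simplex into itself (T is a stochastic map). -/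
open Finset Matrix

private lemma mul_log_div_ge (x y : ℝ) (hx : 0 < x) (hy : 0 < y) :
    x - y ≤ x * Real.log (x / y) := by
  have h := Real.log_le_sub_one_of_pos (div_pos hy hx)
  have hrw : Real.log (x / y) = - Real.log (y / x) := by
    rw [← Real.log_inv, inv_div]
  rw [hrw]
  have hx' : x * (y / x) = y := by field_simp
  nlinarith [h, hx]

/-- Classical corollary via divergences: contraction of the relative entropy
forces a sum-preserving linear map to be stochastic (simplex-preserving). -/
theorem relEnt_contraction_implies_stochastic {n : ℕ} (T : Matrix (Fin n) (Fin n) ℝ)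
    (hsum : ∀ x : Fin n → ℝ, ∑ i, (T.mulVec x) i = ∑ i, x i)
    (hexists : ∃ p₀ : Fin n → ℝ, (∀ i, 0 < p₀ i) ∧ (∑ i, p₀ i = 1) ∧
      (∀ i, 0 < (T.mulVec p₀) i))
    (hcontr : ∀ p q : Fin n → ℝ,
      (∀ i, 0 < p i) → (∑ i, p i = 1) → (∀ i, 0 < q i) → (∑ i, q i = 1) →
      (∀ i, 0 < (T.mulVec p) i) → (∀ i, 0 < (T.mulVec q) i) →
      relEnt (T.mulVec p) (T.mulVec q) ≤ relEnt p q) :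
    ∀ q : Fin n → ℝ, (∀ i, 0 ≤ q i) → (∑ i, q i = 1) →
      ∀ i, 0 ≤ (T.mulVec q) i := by
  obtain ⟨p₀, hp₀pos, hp₀sum, hTp₀pos⟩ := hexists
  intro q hqnn hqsum
  by_contra hneg
  push_neg at hneg
  obtain ⟨i₀, hi₀⟩ := hneg
  set a : Fin n → ℝ := T.mulVec p₀ with ha
  set c : Fin n → ℝ := T.mulVec q with hc
  have hasum : ∑ j, a j = 1 := by rw [ha, hsum, hp₀sum]
  have hne : (univ : Finset (Fin n)).Nonempty := ⟨i₀, mem_univ _⟩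
  -- crossing times
  set f : Fin n → ℝ := fun j => if c j < 0 then a j / (a j - c j) else 1 with hf
  set t₁ : ℝ := univ.inf' hne f with ht₁
  have hfpos : ∀ j, 0 < f j := by
    intro j
    by_cases hcj : c j < 0
    · simp only [hf, if_pos hcj]
      exact div_pos (hTp₀pos j) (by linarith [hTp₀pos j])
    · simp only [hf, if_neg hcj]; norm_num
  have ht₁pos : 0 < t₁ := by
    rw [ht₁, Finset.lt_inf'_iff]
    exact fun j _ => hfpos j
  have ht₁le : ∀ j, t₁ ≤ f j := fun j => Finset.inf'_le f (mem_univ j)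
  have hfi₀ : f i₀ < 1 := by
    simp only [hf, if_pos hi₀]
    rw [div_lt_one (by linarith [hTp₀pos i₀])]
    linarith [hTp₀pos i₀]
  have ht₁lt1 : t₁ < 1 := lt_of_le_of_lt (ht₁le i₀) hfi₀
  obtain ⟨j₀, -, hj₀⟩ := Finset.exists_mem_eq_inf' hne f
  rw [← ht₁] at hj₀
  have hcj₀ : c j₀ < 0 := by
    by_contra h
    have h1 : f j₀ = 1 := by simp [hf, h]
    rw [hj₀, h1] at ht₁lt1; linarith
  have hfj₀ : f j₀ = a j₀ / (a j₀ - c j₀) := by simp [hf, hcj₀]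
  set s : ℝ := a j₀ - c j₀ with hs
  have hspos : 0 < s := by simp only [hs]; linarith [hTp₀pos j₀]
  have ht₁eq : t₁ = a j₀ / s := by rw [hj₀, hfj₀]
  set C : ℝ := -Real.log (1 - t₁) with hC
  set ε : ℝ := min (t₁ / 2) (a j₀ / s * Real.exp (-((C + 2) / a j₀))) with hε
  have hεpos : 0 < ε := by
    apply lt_min (by linarith)
    exact mul_pos (div_pos (hTp₀pos j₀) hspos) (Real.exp_pos _)
  have hεle : ε ≤ t₁ / 2 := min_le_left _ _
  set t : ℝ := t₁ - ε with ht
  have htpos : 0 < t := by rw [ht]; linarith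
  have htlt : t < t₁ := by rw [ht]; linarith
  have htlt1 : t < 1 := lt_trans htlt ht₁lt1
  set qt : Fin n → ℝ := fun i => (1 - t) * p₀ i + t * q i with hqt
  have hqtpos : ∀ i, 0 < qt i := by
    intro i
    have := hqnn i
    have := hp₀pos i
    simp only [hqt]
    nlinarith
  have hqtsum : ∑ i, qt i = 1 := by
    simp only [hqt, Finset.sum_add_distrib, ← Finset.mul_sum, hp₀sum, hqsum]
    ring
  have hTqt : T.mulVec qt = fun j => (1 - t) * a j + t * c j := by
    have hq' : qt = (1 - t) • p₀ + t • q := by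
      funext i; simp [hqt]
    rw [hq', Matrix.mulVec_add, Matrix.mulVec_smul, Matrix.mulVec_smul]
    funext j
    simp [ha, hc]
  set b : Fin n → ℝ := T.mulVec qt with hb
  have hbj : ∀ j, b j = (1 - t) * a j + t * c j := fun j => congrFun hTqt j
  have hbpos : ∀ j, 0 < b j := by
    intro j
    rw [hbj j]
    by_cases hcj : c j < 0
    · have h1 : t < a j / (a j - c j) := lt_of_lt_of_le htlt (by
        have := ht₁le j
        simpa [hf, if_pos hcj] using this)
      have h2 : 0 < a j - c j := by linarith [hTp₀pos j]
      rw [lt_div_iff₀ h2] at h1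
      nlinarith
    · push_neg at hcj
      have := hTp₀pos j
      nlinarith
  have hbsum : ∑ j, b j = 1 := by rw [hb, hsum, hqtsum]
  have hkey := hcontr p₀ qt hp₀pos hp₀sum hqtpos hqtsum hTp₀pos hbpos
  -- upper bound on RHS
  have h1t : (0:ℝ) < 1 - t := by linarith
  have h1t₁ : (0:ℝ) < 1 - t₁ := by linarith
  have hRHS : relEnt p₀ qt ≤ C := by
    have hterm : ∀ i, p₀ i * Real.log (p₀ i / qt i) ≤ p₀ i * (-Real.log (1 - t)) := by
      intro i
      apply mul_le_mul_of_nonneg_left _ (hp₀pos i).le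
      have hlb : (1 - t) * p₀ i ≤ qt i := by
        have := hqnn i; simp only [hqt]; nlinarith
      have hdiv : p₀ i / qt i ≤ (1 - t)⁻¹ := by
        rw [div_le_iff₀ (hqtpos i), inv_mul_eq_div, le_div_iff₀ h1t]
        linarith
      calc Real.log (p₀ i / qt i) ≤ Real.log ((1 - t)⁻¹) :=
            Real.log_le_log (div_pos (hp₀pos i) (hqtpos i)) hdiv
        _ = -Real.log (1 - t) := Real.log_inv _
    calc relEnt p₀ qt ≤ ∑ i, p₀ i * (-Real.log (1 - t)) :=
          Finset.sum_le_sum fun i _ => hterm i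
      _ = -Real.log (1 - t) := by rw [← Finset.sum_mul, hp₀sum, one_mul]
      _ ≤ C := by
          rw [hC, neg_le_neg_iff]
          exact Real.log_le_log h1t₁ (by linarith)
  -- lower bound on LHS
  have hbj₀ : b j₀ = ε * s := by
    have h1 : t₁ * s = a j₀ := by
      rw [ht₁eq, div_mul_cancel₀ _ hspos.ne']
    have h2 : b j₀ = (1 - t) * a j₀ + t * c j₀ := hbj j₀
    have h3 : t = t₁ - ε := ht
    have h4 : s = a j₀ - c j₀ := hs
    linear_combination h2 + h3 * (c j₀ - a j₀) - h1 + (t₁ - ε) * h4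
  have haj₀le1 : a j₀ ≤ 1 := by
    rw [← hasum]
    exact Finset.single_le_sum (fun j _ => (hTp₀pos j).le) (mem_univ j₀)
  have hmain : C + 2 ≤ a j₀ * Real.log (a j₀ / b j₀) := by
    have hε2 : ε ≤ a j₀ / s * Real.exp (-((C + 2) / a j₀)) := min_le_right _ _
    have hb0le : b j₀ ≤ a j₀ * Real.exp (-((C + 2) / a j₀)) := by
      rw [hbj₀]
      calc ε * s ≤ (a j₀ / s * Real.exp (-((C + 2) / a j₀))) * s :=
            mul_le_mul_of_nonneg_right hε2 hspos.le
        _ = a j₀ * Real.exp (-((C + 2) / a j₀)) := by field_simp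
    have hexplog : (C + 2) / a j₀ ≤ Real.log (a j₀ / b j₀) := by
      rw [Real.le_log_iff_exp_le (div_pos (hTp₀pos j₀) (hbpos j₀))]
      rw [le_div_iff₀ (hbpos j₀)]
      calc Real.exp ((C + 2) / a j₀) * b j₀
            ≤ Real.exp ((C + 2) / a j₀) * (a j₀ * Real.exp (-((C + 2) / a j₀))) :=
            mul_le_mul_of_nonneg_left hb0le (Real.exp_pos _).le
        _ = a j₀ := by
            rw [Real.exp_neg]
            field_simp
        _ ≤ a j₀ := le_refl _
    calc C + 2 = a j₀ * ((C + 2) / a j₀) := by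
          rw [mul_div_cancel₀ _ (hTp₀pos j₀).ne']
      _ ≤ a j₀ * Real.log (a j₀ / b j₀) :=
          mul_le_mul_of_nonneg_left hexplog (hTp₀pos j₀).le
  have hLHS : C + 1 ≤ relEnt a b := by
    have hsplit : relEnt a b =
        a j₀ * Real.log (a j₀ / b j₀) +
          ∑ j ∈ univ.erase j₀, a j * Real.log (a j / b j) := by
      rw [relEnt, ← Finset.add_sum_erase _ _ (mem_univ j₀)]
    have hrest : ∑ j ∈ univ.erase j₀, (a j - b j) ≤
        ∑ j ∈ univ.erase j₀, a j * Real.log (a j / b j) :=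
      Finset.sum_le_sum fun j _ => mul_log_div_ge _ _ (hTp₀pos j) (hbpos j)
    have hsuma : ∑ j ∈ univ.erase j₀, a j = 1 - a j₀ := by
      have := Finset.add_sum_erase univ a (mem_univ j₀)
      linarith [hasum ▸ this]
    have hsumb : ∑ j ∈ univ.erase j₀, b j = 1 - b j₀ := by
      have := Finset.add_sum_erase univ b (mem_univ j₀)
      linarith [hbsum ▸ this]
    have hrestval : ∑ j ∈ univ.erase j₀, (a j - b j) = b j₀ - a j₀ := by
      rw [Finset.sum_sub_distrib, hsuma, hsumb]; ring
    have hbj₀pos : 0 < b j₀ := hbpos j₀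
    rw [hsplit]
    have := hrestval ▸ hrest
    linarith
  have : relEnt a b ≤ relEnt p₀ qt := hkey
  linarith
end

section
/- For the Bures/SLD choice f(x) = (1+x)/2, the quantum Fisher quadratic form K_{f,ρ}(A,A) = Σ_{i,j} 2|Aᵢⱼ|²/(λᵢ+λⱼ) (in the eigenbasis of the full-rank density matrix ρ) contracts under every CPTP map Φ: K_{f,Φ(ρ)}(Φ(A),Φ(A)) ≤ K_{f,ρ}(A,A), for all full-rank ρ with Φ(ρ) full-rank and all Hermitian A. -/
/-!
The SLD Fisher form is a maximum: `K_σ(B, B) = max_X (2 Re tr(XB) - tr(XσX))` over Hermitian `X`,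
attained at `X_ij = 2 B_ij / (λ_i + λ_j)` in the eigenbasis of `σ`. Take `X` optimal for
`(Φ ρ, Φ A)` and pull it back along the dual map, `Y = Φ* X`. The linear term is unchanged,
while `tr(X Φ(ρ) X) = tr(Φ*(X²) ρ) ≥ tr(Y ρ Y)` by the Kadison–Schwarz inequality
`Φ*(X²) ≥ Φ*(X)²` for the unital map `Φ*`. Hence `K_{Φρ}(ΦA) ≤ 2 Re tr(YA) - tr(YρY) ≤ K_ρ(A)`.
-/

open Matrix Finset
open scoped ComplexOrder

namespace Complex

theorem two_mul_re_mul_star_sub_le {s : ℝ} (hs : 0 < s) (x b : ℂ) :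
    2 * (x * star b).re - s / 2 * ‖x‖ ^ 2 ≤ 2 * ‖b‖ ^ 2 / s := by
  have hre : (x * star b).re ≤ ‖b‖ * ‖x‖ := by
    simpa [mul_comm] using re_le_norm (x * star b)
  rw [le_div_iff₀ hs]
  nlinarith [sq_nonneg (s * ‖x‖ - 2 * ‖b‖)]

theorem two_mul_re_mul_star_sub_eq {s : ℝ} (hs : 0 < s) (b : ℂ) :
    2 * ((2 / s : ℝ) * b * star b).re - s / 2 * ‖(2 / s : ℝ) * b‖ ^ 2 = 2 * ‖b‖ ^ 2 / s := by
  rw [mul_assoc, RCLike.star_def, mul_conj, normSq_eq_norm_sq, ← ofReal_mul, ofReal_re, norm_mul,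
    norm_real,
    Real.norm_of_nonneg (by positivity)]
  field_simp
  ring

end Complex

namespace Matrix

variable {n : Type*} [Fintype n]

theorem PosSemidef.trace_mul_nonneg {𝕜 : Type*} [RCLike 𝕜] {P Q : Matrix n n 𝕜}
    (hP : P.PosSemidef) (hQ : Q.PosSemidef) : 0 ≤ (P * Q).trace := by
  classical
  obtain ⟨C, rfl⟩ : ∃ C : Matrix n n 𝕜, P = star C * C := by
    open scoped MatrixOrder in exact CStarAlgebra.nonneg_iff_eq_star_mul_self.mp hP.nonneg
  rw [Matrix.mul_assoc, trace_mul_comm, Matrix.mul_assoc, ← Matrix.mul_assoc,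
    star_eq_conjTranspose]
  exact (hQ.mul_mul_conjTranspose_same C).trace_nonneg

theorem trace_conjStarAlgAut [DecidableEq n] (u : unitary (Matrix n n ℂ)) (X : Matrix n n ℂ) :
    (Unitary.conjStarAlgAut ℂ _ u X).trace = X.trace := by
  rw [Unitary.conjStarAlgAut_apply, trace_mul_cycle, Unitary.coe_star_mul_self, Matrix.one_mul]

theorem IsHermitian.conjStarAlgAut [DecidableEq n] (u : unitary (Matrix n n ℂ)) {X : Matrix n n ℂ}
    (hX : X.IsHermitian) : (Unitary.conjStarAlgAut ℂ _ u X).IsHermitian :=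
  isHermitian_iff_isSelfAdjoint.mpr (hX.isSelfAdjoint.map _)

theorem re_trace_mul_of_isHermitian {X B : Matrix n n ℂ} (hB : B.IsHermitian) :
    (X * B).trace.re = ∑ i, ∑ j, (X i j * star (B i j)).re := by
  simp only [trace, diag_apply, mul_apply, Complex.re_sum, hB.apply]

theorem re_trace_mul_diagonal_mul_of_isHermitian [DecidableEq n] {X : Matrix n n ℂ}
    (hX : X.IsHermitian) (w : n → ℝ) :
    (X * diagonal (fun j => (w j : ℂ)) * X).trace.re
      = ∑ i, ∑ j, (w i + w j) / 2 * ‖X i j‖ ^ 2 := by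
  have hnorm : ∀ i j, ‖X i j‖ = ‖X j i‖ := fun i j => by rw [← hX.apply, norm_star]
  have hsq : ∀ i j, (X i j * w j * X j i).re = w j * ‖X i j‖ ^ 2 := fun i j => by
    rw [← hX.apply j i, mul_right_comm, RCLike.star_def, Complex.mul_conj, ← Complex.ofReal_mul,
      Complex.ofReal_re, Complex.normSq_eq_norm_sq, mul_comm]
  have hswap : ∑ i, ∑ j, w j * ‖X i j‖ ^ 2 = ∑ i, ∑ j, w i * ‖X i j‖ ^ 2 := by
    rw [Finset.sum_comm]
    simp only [hnorm _ _]
  calc (X * diagonal (fun j => (w j : ℂ)) * X).trace.re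
      = ∑ i, ∑ j, w j * ‖X i j‖ ^ 2 := by
        simp only [trace, diag_apply, mul_apply (M := X * _), mul_diagonal, Complex.re_sum, hsq]
    _ = ∑ i, ∑ j, (w i + w j) / 2 * ‖X i j‖ ^ 2 := by
        simp only [add_div, add_mul, Finset.sum_add_distrib, div_mul_eq_mul_div, ← Finset.sum_div]
        linarith

noncomputable def sldObjective (σ B X : Matrix n n ℂ) : ℝ :=
  2 * (X * B).trace.re - (X * σ * X).trace.re

theorem sldObjective_conjStarAlgAut [DecidableEq n] (u : unitary (Matrix n n ℂ))
    (σ B X : Matrix n n ℂ) :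
    sldObjective (Unitary.conjStarAlgAut ℂ _ u σ) (Unitary.conjStarAlgAut ℂ _ u B)
      (Unitary.conjStarAlgAut ℂ _ u X) = sldObjective σ B X := by
  simp only [sldObjective, ← map_mul, trace_conjStarAlgAut]

theorem image_sldObjective_conjStarAlgAut [DecidableEq n] (u : unitary (Matrix n n ℂ))
    (σ B : Matrix n n ℂ) :
    sldObjective (Unitary.conjStarAlgAut ℂ _ u σ) (Unitary.conjStarAlgAut ℂ _ u B) ''
      {X | X.IsHermitian} = sldObjective σ B '' {X | X.IsHermitian} := by
  ext y
  constructor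
  · rintro ⟨X, hX, rfl⟩
    refine ⟨(Unitary.conjStarAlgAut ℂ _ u).symm X, ?_, ?_⟩
    · rw [Unitary.conjStarAlgAut_symm]
      exact hX.conjStarAlgAut _
    · rw [← sldObjective_conjStarAlgAut u, StarAlgEquiv.apply_symm_apply]
  · rintro ⟨X, hX, rfl⟩
    exact ⟨_, hX.conjStarAlgAut u, sldObjective_conjStarAlgAut u σ B X⟩

theorem sldObjective_diagonal [DecidableEq n] (w : n → ℝ) {B X : Matrix n n ℂ}
    (hB : B.IsHermitian) (hX : X.IsHermitian) :
    sldObjective (diagonal fun j => (w j : ℂ)) B X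
      = ∑ i, ∑ j, (2 * (X i j * star (B i j)).re - (w i + w j) / 2 * ‖X i j‖ ^ 2) := by
  rw [sldObjective, re_trace_mul_of_isHermitian hB, re_trace_mul_diagonal_mul_of_isHermitian hX,
    Finset.mul_sum, ← Finset.sum_sub_distrib]
  simp only [Finset.mul_sum, Finset.sum_sub_distrib]

theorem isGreatest_sldObjective_diagonal [DecidableEq n] {w : n → ℝ} (hw : ∀ i, 0 < w i)
    {B : Matrix n n ℂ} (hB : B.IsHermitian) :
    IsGreatest (sldObjective (diagonal fun j => (w j : ℂ)) B '' {X | X.IsHermitian})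
      (∑ i, ∑ j, 2 * ‖B i j‖ ^ 2 / (w i + w j)) := by
  have hpos : ∀ i j, 0 < w i + w j := fun i j => add_pos (hw i) (hw j)
  set L : Matrix n n ℂ := of fun i j => ((2 / (w i + w j) : ℝ) : ℂ) * B i j
  have hL : L.IsHermitian := by
    ext i j
    simp only [L, conjTranspose_apply, of_apply, star_mul', Complex.star_def, Complex.conj_ofReal,
      ← hB.apply i j, add_comm (w i)]
  refine ⟨⟨L, hL, ?_⟩, ?_⟩
  · rw [sldObjective_diagonal w hB hL]
    exact Finset.sum_congr rfl fun i _ => Finset.sum_congr rfl fun j _ =>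
      Complex.two_mul_re_mul_star_sub_eq (hpos i j) (B i j)
  · rintro _ ⟨X, hX, rfl⟩
    rw [sldObjective_diagonal w hB hX]
    exact Finset.sum_le_sum fun i _ => Finset.sum_le_sum fun j _ =>
      Complex.two_mul_re_mul_star_sub_le (hpos i j) _ _

section Kraus

variable {ι m n : Type*} [Fintype ι] [Fintype n]

def krausMap (V : ι → Matrix m n ℂ) (X : Matrix n n ℂ) : Matrix m m ℂ :=
  ∑ k, V k * X * (V k)ᴴ

theorem krausMap_conjTranspose (V : ι → Matrix m n ℂ) (X : Matrix n n ℂ) :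
    krausMap V Xᴴ = (krausMap V X)ᴴ := by
  simp only [krausMap, conjTranspose_sum, conjTranspose_mul, conjTranspose_conjTranspose,
    Matrix.mul_assoc]

theorem IsHermitian.krausMap (V : ι → Matrix m n ℂ) {X : Matrix n n ℂ} (hX : X.IsHermitian) :
    (krausMap V X).IsHermitian := by
  rw [IsHermitian, ← krausMap_conjTranspose, hX.eq]

theorem trace_mul_krausMap [Fintype m] (V : ι → Matrix m n ℂ) (Y : Matrix m m ℂ)
    (X : Matrix n n ℂ) :
    (Y * krausMap V X).trace = (krausMap (fun k => (V k)ᴴ) Y * X).trace := by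
  simp only [krausMap, Matrix.mul_sum, Matrix.sum_mul, trace_sum, conjTranspose_conjTranspose]
  refine Finset.sum_congr rfl fun k _ => ?_
  rw [← Matrix.mul_assoc, ← Matrix.mul_assoc, trace_mul_comm]
  simp only [Matrix.mul_assoc]

/-- Kadison–Schwarz inequality for a unital Kraus map. -/
theorem posSemidef_krausMap_conjTranspose_mul_self_sub [Fintype m] [DecidableEq m]
    (V : ι → Matrix m n ℂ) (hV : ∑ k, V k * (V k)ᴴ = 1) (L : Matrix n n ℂ) :
    (krausMap V (Lᴴ * L) - (krausMap V L)ᴴ * krausMap V L).PosSemidef := by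
  set Y := krausMap V L
  have hexpand : ∀ k, (L * (V k)ᴴ - (V k)ᴴ * Y)ᴴ * (L * (V k)ᴴ - (V k)ᴴ * Y)
      = V k * (Lᴴ * L) * (V k)ᴴ - V k * Lᴴ * (V k)ᴴ * Y - Yᴴ * (V k * L * (V k)ᴴ)
        + Yᴴ * (V k * (V k)ᴴ) * Y := fun k => by
    simp only [conjTranspose_sub, conjTranspose_mul, conjTranspose_conjTranspose, Matrix.sub_mul,
      Matrix.mul_sub, Matrix.mul_assoc]
    abel
  have hsum : ∑ k, (L * (V k)ᴴ - (V k)ᴴ * Y)ᴴ * (L * (V k)ᴴ - (V k)ᴴ * Y)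
      = krausMap V (Lᴴ * L) - Yᴴ * Y := by
    simp only [hexpand, Finset.sum_add_distrib, Finset.sum_sub_distrib, ← Finset.sum_mul,
      ← Finset.mul_sum, hV]
    rw [← krausMap, ← krausMap, krausMap_conjTranspose, Matrix.mul_one]
    abel
  rw [← hsum]
  exact posSemidef_sum _ fun k _ => posSemidef_conjTranspose_mul_self _

theorem sldObjective_krausMap_le [Fintype m] [DecidableEq n] (V : ι → Matrix m n ℂ)
    (hV : ∑ k, (V k)ᴴ * V k = 1) {ρ : Matrix n n ℂ} (hρ : ρ.PosSemidef) (A : Matrix n n ℂ)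
    {L : Matrix m m ℂ} (hL : L.IsHermitian) :
    sldObjective (krausMap V ρ) (krausMap V A) L
      ≤ sldObjective ρ A (krausMap (fun k => (V k)ᴴ) L) := by
  set Y := krausMap (fun k => (V k)ᴴ) L
  have hKS := posSemidef_krausMap_conjTranspose_mul_self_sub (fun k => (V k)ᴴ)
    (by simpa only [conjTranspose_conjTranspose] using hV) L
  rw [(hL.krausMap _).eq, hL.eq] at hKS
  have hgap := Complex.nonneg_iff.mp (hKS.trace_mul_nonneg hρ) |>.1
  rw [Matrix.sub_mul, trace_sub, Complex.sub_re] at hgap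
  have hquadL : (L * krausMap V ρ * L).trace = (krausMap (fun k => (V k)ᴴ) (L * L) * ρ).trace := by
    rw [trace_mul_cycle, ← trace_mul_krausMap]
  have hquadY : (Y * ρ * Y).trace = (Y * Y * ρ).trace := trace_mul_cycle _ _ _
  rw [sldObjective, sldObjective, trace_mul_krausMap, hquadL, hquadY]
  linarith

end Kraus

end Matrix

theorem Kf_sld_eq_sum {d : ℕ} {σ : Matrix (Fin d) (Fin d) ℂ} (hσ : σ.PosDef)
    (B : Matrix (Fin d) (Fin d) ℂ) :
    Kf (fun x => (1 + x) / 2) σ B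
      = ∑ i, ∑ j, 2 * ‖Unitary.conjStarAlgAut ℂ _ (star hσ.1.eigenvectorUnitary) B i j‖ ^ 2 /
          (hσ.1.eigenvalues i + hσ.1.eigenvalues j) := by
  rw [Kf, dif_pos hσ.1]
  refine Finset.sum_congr rfl fun i _ => Finset.sum_congr rfl fun j _ => ?_
  have hj := hσ.eigenvalues_pos j
  rw [Unitary.conjStarAlgAut_star_apply, star_eq_conjTranspose]
  field_simp
  ring

theorem isGreatest_sldObjective {d : ℕ} {σ B : Matrix (Fin d) (Fin d) ℂ} (hσ : σ.PosDef)
    (hB : B.IsHermitian) :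
    IsGreatest (sldObjective σ B '' {X | X.IsHermitian}) (Kf (fun x => (1 + x) / 2) σ B) := by
  rw [Kf_sld_eq_sum hσ, ← image_sldObjective_conjStarAlgAut (star hσ.1.eigenvectorUnitary),
    hσ.1.conjStarAlgAut_star_eigenvectorUnitary]
  exact isGreatest_sldObjective_diagonal hσ.eigenvalues_pos (hB.conjStarAlgAut _)

theorem sld_fisher_contracts_under_cptp_general {d κ : ℕ}
    (V : Fin κ → Matrix (Fin d) (Fin d) ℂ)
    (hKraus : ∑ k, (V k)ᴴ * V k = (1 : Matrix (Fin d) (Fin d) ℂ))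
    (ρ : Matrix (Fin d) (Fin d) ℂ) (hρ : ρ.PosDef)
    (hΦρ : (∑ k, V k * ρ * (V k)ᴴ).PosDef)
    (A : Matrix (Fin d) (Fin d) ℂ) (hA : A.IsHermitian) :
    Kf (fun x => (1 + x) / 2) (∑ k, V k * ρ * (V k)ᴴ)
        (∑ k, V k * A * (V k)ᴴ)
      ≤ Kf (fun x => (1 + x) / 2) ρ A := by
  obtain ⟨⟨L, hL, hL_opt⟩, -⟩ := isGreatest_sldObjective hΦρ (hA.krausMap V)
  calc Kf (fun x => (1 + x) / 2) (krausMap V ρ) (krausMap V A)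
      = sldObjective (krausMap V ρ) (krausMap V A) L := hL_opt.symm
    _ ≤ sldObjective ρ A (krausMap (fun k => (V k)ᴴ) L) :=
        sldObjective_krausMap_le V hKraus hρ.posSemidef A hL
    _ ≤ Kf (fun x => (1 + x) / 2) ρ A :=
        (isGreatest_sldObjective hρ hA).2 ⟨_, hL.krausMap _, rfl⟩

/-- Petz monotonicity for the SLD/Bures metric `f(x) = (1+x)/2`: the
corresponding quantum Fisher form contracts under every CPTP map given in
Kraus form. -/
theorem sld_fisher_contracts_under_cptp {d κ : ℕ}
    (V : Fin κ → Matrix (Fin d) (Fin d) ℂ)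
    (hKraus : ∑ k, (V k)ᴴ * V k = (1 : Matrix (Fin d) (Fin d) ℂ))
    (ρ : Matrix (Fin d) (Fin d) ℂ) (hρ : ρ.PosDef) (hρtr : Matrix.trace ρ = 1)
    (hΦρ : (∑ k, V k * ρ * (V k)ᴴ).PosDef)
    (A : Matrix (Fin d) (Fin d) ℂ) (hA : A.IsHermitian) :
    Kf (fun x => (1 + x) / 2) (∑ k, V k * ρ * (V k)ᴴ)
        (∑ k, V k * A * (V k)ᴴ)
      ≤ Kf (fun x => (1 + x) / 2) ρ A :=
  sld_fisher_contracts_under_cptp_general V hKraus ρ hρ hΦρ A hA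
end
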